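/- arXiv:2112.11362 — 3 statements merged into one kernel-verified Lean document; each statement's English description precedes it below -/
import Mathlib

section
/- Let M be a SEM, u a fixed context, and ≺_u a total order on the endogenous variables V. Then ≺_u satisfies condition Acyc1 for M in context u if and only if ≺_u satisfies condition Acyc2 for M in context u. -/
namespace Causal

/-- A signature: exogenous variables `U`, endogenous variables `V`, a universe
of values `Val`, range functions `RU`, `RV`, and a set `Int` of allowed
interventions (partial assignments of in-range values to endogenous variables). -/
structure Signature : Type 1 where
  U : Type
  V : Type
  Val : Type
  RU : U → Set Val
  RV : V → Set Val
  RU_nonempty : ∀ Y, (RU Y).Nonempty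
  RV_nonempty : ∀ X, (RV X).Nonempty
  Int : Set (V → Option Val)
  Int_ok : ∀ I ∈ Int, ∀ X x, I X = some x → x ∈ RV X

variable {S : Signature}

/-- A finite signature: finitely many variables, each with finite range. -/
def Signature.IsFinite (S : Signature) : Prop :=
  Finite S.U ∧ Finite S.V ∧ (∀ Y, (S.RU Y).Finite) ∧ (∀ X, (S.RV X).Finite)

/-- An intervention is valid if it only sets variables to values in their ranges. -/
def ValidInt (S : Signature) (I : S.V → Option S.Val) : Prop :=
  ∀ X x, I X = some x → x ∈ S.RV X

/-- A universal signature: all (valid) interventions are allowed. -/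
def Signature.Universal (S : Signature) : Prop :=
  S.Int = {I | ValidInt S I}

/-- A context: an assignment of in-range values to the exogenous variables. -/
def Context (S : Signature) : Type := {u : S.U → S.Val // ∀ Y, u Y ∈ S.RU Y}

/-- An assignment of in-range values to the endogenous variables (an outcome). -/
def Assignment (S : Signature) : Type := {v : S.V → S.Val // ∀ X, v X ∈ S.RV X}

open Classical in
/-- `updInt I X x` is the intervention `I; X ← x`. -/
noncomputable def updInt (I : S.V → Option S.Val) (X : S.V) (x : S.Val) :
    S.V → Option S.Val :=
  fun Y => if Y = X then some x else I Y

/-- Events: Boolean combinations of primitive events `X = x` (with `x ∈ R(X)`). -/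
inductive Event (S : Signature) : Type where
  | tru : Event S
  | prim : (X : S.V) → (x : S.Val) → x ∈ S.RV X → Event S
  | not : Event S → Event S
  | and : Event S → Event S → Event S
  | or : Event S → Event S → Event S

namespace Event

def imp (a b : Event S) : Event S := Event.or (Event.not a) b

/-- Satisfaction of an event by an assignment. -/
def sat (v : Assignment S) : Event S → Prop
  | .tru => True
  | .prim X x _ => v.1 X = x
  | .not e => ¬ Event.sat v e
  | .and a b => Event.sat v a ∧ Event.sat v b
  | .or a b => Event.sat v a ∨ Event.sat v b

/-- Boolean evaluation of an event under an arbitrary valuation of its atoms;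
used to define propositional tautologies. -/
def evalB (val : S.V → S.Val → Bool) : Event S → Bool
  | .tru => true
  | .prim X x _ => val X x
  | .not e => !(Event.evalB val e)
  | .and a b => Event.evalB val a && Event.evalB val b
  | .or a b => Event.evalB val a || Event.evalB val b

/-- An event is a propositional tautology if it is true under every Boolean
valuation of its primitive events. -/
def Taut (e : Event S) : Prop := ∀ val, Event.evalB val e = true

/-- The value `x` of variable `X` is mentioned in the event. -/
def mentionsVal (X : S.V) (x : S.Val) : Event S → Prop
  | .tru => False
  | .prim X' x' _ => X' = X ∧ x' = x
  | .not e => Event.mentionsVal X x e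
  | .and a b => Event.mentionsVal X x a ∨ Event.mentionsVal X x b
  | .or a b => Event.mentionsVal X x a ∨ Event.mentionsVal X x b

def bigAnd (l : List (Event S)) : Event S := l.foldr Event.and Event.tru

def bigOr (l : List (Event S)) : Event S := l.foldr Event.or (Event.not Event.tru)

/-- The disjunction `⋁_{x ∈ l} X = x`. -/
def disjEq (X : S.V) (l : List {x : S.Val // x ∈ S.RV X}) : Event S :=
  bigOr (l.map fun x => Event.prim X x.1 x.2)

/-- The conjunction `⋀ X = x` over a list of (variable, value) pairs. -/
def conjEqL (l : List ((X : S.V) × {x : S.Val // x ∈ S.RV X})) : Event S :=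
  bigAnd (l.map fun p => Event.prim p.1 p.2.1 p.2.2)

/-- Conjunctive formulas: conjunctions of literals `X = x` and `X ≠ x`. -/
inductive Conjunctive : Event S → Prop
  | tru : Conjunctive Event.tru
  | eq (X x hx) : Conjunctive (Event.prim X x hx)
  | ne (X x hx) : Conjunctive (Event.not (Event.prim X x hx))
  | and {a b} : Conjunctive a → Conjunctive b → Conjunctive (Event.and a b)

/-- The set of conjuncts of a (conjunctive) formula. -/
def conjuncts : Event S → Set (Event S)
  | .tru => ∅
  | .and a b => Event.conjuncts a ∪ Event.conjuncts b
  | e => {e}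

/-- Membership in the restricted language: only named variables and named values. -/
def InLang (W : Set S.V) (R' : S.V → Set S.Val) : Event S → Prop
  | .tru => True
  | .prim X x _ => X ∈ W ∧ x ∈ R' X
  | .not e => Event.InLang W R' e
  | .and a b => Event.InLang W R' a ∧ Event.InLang W R' b
  | .or a b => Event.InLang W R' a ∧ Event.InLang W R' b

end Event

/-- Causal formulas: Boolean combinations of atomic formulas `[Y ← y]φ`
with `Y ← y` an allowed intervention and `φ` an event. -/
inductive CForm (S : Signature) : Type where
  | tru : CForm S
  | box : (I : S.V → Option S.Val) → I ∈ S.Int → Event S → CForm S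
  | not : CForm S → CForm S
  | and : CForm S → CForm S → CForm S
  | or : CForm S → CForm S → CForm S

namespace CForm

def imp (a b : CForm S) : CForm S := CForm.or (CForm.not a) b

def iff (a b : CForm S) : CForm S := CForm.and (imp a b) (imp b a)

/-- `⟨Y ← y⟩φ` abbreviates `¬[Y ← y]¬φ`. -/
def dia (I : S.V → Option S.Val) (hI : I ∈ S.Int) (e : Event S) : CForm S :=
  CForm.not (CForm.box I hI (Event.not e))

/-- Satisfaction of a causal formula at a context, relative to an outcome map `O`. -/
def sat (O : (I : S.V → Option S.Val) → I ∈ S.Int → Context S → Set (Assignment S))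
    (u : Context S) : CForm S → Prop
  | .tru => True
  | .box I hI e => ∀ v ∈ O I hI u, e.sat v
  | .not φ => ¬ CForm.sat O u φ
  | .and a b => CForm.sat O u a ∧ CForm.sat O u b
  | .or a b => CForm.sat O u a ∨ CForm.sat O u b

/-- Boolean evaluation of a causal formula under an arbitrary valuation of its
atomic formulas; used to define propositional tautologies. -/
def evalB (val : (S.V → Option S.Val) → Event S → Bool) : CForm S → Bool
  | .tru => true
  | .box I _ e => val I e
  | .not φ => !(CForm.evalB val φ)
  | .and a b => CForm.evalB val a && CForm.evalB val b
  | .or a b => CForm.evalB val a || CForm.evalB val b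

/-- A causal formula is an instance of a propositional tautology if it is true
under every Boolean valuation of its atomic formulas. -/
def Taut (φ : CForm S) : Prop := ∀ val, CForm.evalB val φ = true

/-- The value `x` of variable `X` is mentioned in the causal formula
(either in a primitive event or in an intervention). -/
def mentionsVal (X : S.V) (x : S.Val) : CForm S → Prop
  | .tru => False
  | .box I _ e => I X = some x ∨ e.mentionsVal X x
  | .not φ => CForm.mentionsVal X x φ
  | .and a b => CForm.mentionsVal X x a ∨ CForm.mentionsVal X x b
  | .or a b => CForm.mentionsVal X x a ∨ CForm.mentionsVal X x b

def bigAnd (l : List (CForm S)) : CForm S := l.foldr CForm.and CForm.tru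

def bigOr (l : List (CForm S)) : CForm S := l.foldr CForm.or (CForm.not CForm.tru)

/-- Membership in the restricted language `L_{W,R',I'}(S)`. -/
def InLang (W : Set S.V) (R' : S.V → Set S.Val) (I' : Set (S.V → Option S.Val)) :
    CForm S → Prop
  | .tru => True
  | .box I _ e => I ∈ I' ∧ e.InLang W R'
  | .not φ => CForm.InLang W R' I' φ
  | .and a b => CForm.InLang W R' I' a ∧ CForm.InLang W R' I' b
  | .or a b => CForm.InLang W R' I' a ∧ CForm.InLang W R' I' b

end CForm

/-- A structural equations model over `S`: each endogenous variable gets an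
equation determining its value from the values of all other variables
(formally, `F X u v` does not depend on `v X`). -/
structure SEM (S : Signature) where
  F : S.V → (S.U → S.Val) → (S.V → S.Val) → S.Val
  F_range : ∀ X uu vv, F X uu vv ∈ S.RV X
  F_indep_self : ∀ X uu vv vv', (∀ Y, Y ≠ X → vv Y = vv' Y) → F X uu vv = F X uu vv'

namespace SEM

/-- The outcomes of a SEM under an intervention: solutions of the modified equations. -/
def outcomes (M : SEM S) (u : Context S) (I : S.V → Option S.Val) :
    Set (Assignment S) :=
  {v | ∀ X, (∀ x, I X = some x → v.1 X = x) ∧ (I X = none → v.1 X = M.F X u.1 v.1)}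

def sat (M : SEM S) (u : Context S) (φ : CForm S) : Prop :=
  φ.sat (fun I _ u' => M.outcomes u' I) u

def Valid (M : SEM S) (φ : CForm S) : Prop := ∀ u, M.sat u φ

/-- `X` is independent of `Y` in context `uu`: the equation for `X` does not
depend on the value of `Y`. -/
def IndepAt (M : SEM S) (uu : S.U → S.Val) (X Y : S.V) : Prop :=
  ∀ vv vv', (∀ Z, Z ≠ Y → vv Z = vv' Z) → M.F X uu vv = M.F X uu vv'

/-- An acyclic (recursive) SEM. -/
def Acyclic (M : SEM S) : Prop :=
  ∀ u : Context S, ∃ lt : S.V → S.V → Prop, IsStrictTotalOrder S.V lt ∧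
    ∀ X Y, lt X Y → M.IndepAt u.1 X Y

end SEM

/-- A generalized structural equations model: an arbitrary (effective) map from
allowed interventions and contexts to sets of outcomes. -/
structure GSEM (S : Signature) where
  F : (I : S.V → Option S.Val) → I ∈ S.Int → Context S → Set (Assignment S)
  effective : ∀ I hI u v, v ∈ F I hI u → ∀ X x, I X = some x → v.1 X = x

namespace GSEM

def sat (M : GSEM S) (u : Context S) (φ : CForm S) : Prop :=
  φ.sat M.F u

def Valid (M : GSEM S) (φ : CForm S) : Prop := ∀ u, M.sat u φ

/-- A finitary GSEM: all outcome sets are finite. -/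
def Finitary (M : GSEM S) : Prop := ∀ I hI u, (M.F I hI u).Finite

end GSEM

/-- Equivalence of two GSEMs: same outcomes for all contexts and allowed interventions. -/
def GSEM.equiv (M M' : GSEM S) : Prop := ∀ I hI u, M.F I hI u = M'.F I hI u

/-- `L(S)`-equivalence of two GSEMs: they agree on all causal formulas. -/
def GSEM.LEquiv (M M' : GSEM S) : Prop := ∀ u φ, M.sat u φ ↔ M'.sat u φ

/-- Equivalence of a SEM and a GSEM. -/
def SEM.equivGSEM (M : SEM S) (M' : GSEM S) : Prop :=
  ∀ (I : S.V → Option S.Val) (hI : I ∈ S.Int) (u : Context S),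
    M.outcomes u I = M'.F I hI u

/-- The projection of an outcome set to a single variable. -/
def projSet (T : Set (Assignment S)) (Y : S.V) : Set S.Val := (fun v => v.1 Y) '' T

/-- The restriction of an outcome set to a set of variables. -/
def restrictSet (T : Set (Assignment S)) (Wv : Set S.V) : Set (Wv → S.Val) :=
  (fun (v : Assignment S) (Y : Wv) => v.1 Y.1) '' T

/-! ### Axiom schemas -/

/-- D0: all instances of propositional tautologies. -/
def AxD0 (S : Signature) : Set (CForm S) := {φ | φ.Taut}

/-- D1 (functionality): `[Y ← y](X = x ⇒ X ≠ x')` for `x ≠ x'`. -/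
def AxD1 (S : Signature) : Set (CForm S) :=
  {φ | ∃ (I : S.V → Option S.Val) (hI : I ∈ S.Int) (X : S.V) (x x' : S.Val)
      (hx : x ∈ S.RV X) (hx' : x' ∈ S.RV X), x ≠ x' ∧
    φ = CForm.box I hI (Event.imp (Event.prim X x hx) (Event.not (Event.prim X x' hx')))}

/-- D2 (definiteness): `[Y ← y](⋁_{x ∈ R(X)} X = x)`. -/
def AxD2 (S : Signature) : Set (CForm S) :=
  {φ | ∃ (I : S.V → Option S.Val) (hI : I ∈ S.Int) (X : S.V)
      (l : List {x : S.Val // x ∈ S.RV X}),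
    (∀ x : {x : S.Val // x ∈ S.RV X}, x ∈ l) ∧ φ = CForm.box I hI (Event.disjEq X l)}

/-- D3 (composition): `⟨X ← x⟩(W = w ∧ φ) ⇒ ⟨X ← x; W ← w⟩φ`. -/
def AxD3 (S : Signature) : Set (CForm S) :=
  {ψ | ∃ (I : S.V → Option S.Val) (hI : I ∈ S.Int) (W : S.V) (w : S.Val)
      (hw : w ∈ S.RV W) (hIW : updInt I W w ∈ S.Int) (e : Event S),
    ψ = CForm.imp (CForm.dia I hI (Event.and (Event.prim W w hw) e))
          (CForm.dia (updInt I W w) hIW e)}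

/-- D4 (effectiveness): `[X ← x](X = x)`. -/
def AxD4 (S : Signature) : Set (CForm S) :=
  {φ | ∃ (I : S.V → Option S.Val) (hI : I ∈ S.Int) (X : S.V) (x : S.Val)
      (hx : x ∈ S.RV X), I X = some x ∧ φ = CForm.box I hI (Event.prim X x hx)}

/-- D5 (reversibility), with `Z = V − (X ∪ {W, Y})`. -/
def AxD5 (S : Signature) : Set (CForm S) :=
  {φ | ∃ (I : S.V → Option S.Val) (hI : I ∈ S.Int) (Y : S.V) (y : S.Val)
      (hy : y ∈ S.RV Y) (W : S.V) (w : S.Val) (hw : w ∈ S.RV W)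
      (hIY : updInt I Y y ∈ S.Int) (hIW : updInt I W w ∈ S.Int)
      (lZ : List ((X : S.V) × {x : S.Val // x ∈ S.RV X})),
    (lZ.map Sigma.fst).Nodup ∧
    (∀ Z : S.V, (∃ p ∈ lZ, p.1 = Z) ↔ (I Z = none ∧ Z ≠ W ∧ Z ≠ Y)) ∧
    φ = CForm.imp
      (CForm.and
        (CForm.dia (updInt I Y y) hIY (Event.and (Event.prim W w hw) (Event.conjEqL lZ)))
        (CForm.dia (updInt I W w) hIW (Event.and (Event.prim Y y hy) (Event.conjEqL lZ))))
      (CForm.dia I hI (Event.and (Event.prim W w hw)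
        (Event.and (Event.prim Y y hy) (Event.conjEqL lZ))))}

/-- A disjunct of the formula `Y ⇝ Z` ("Y affects Z"). -/
noncomputable def ltComp (I : S.V → Option S.Val) (hI : I ∈ S.Int) (Y : S.V) (y : S.Val)
    (hIY : updInt I Y y ∈ S.Int) (Z : S.V) (z z' : S.Val)
    (hz : z ∈ S.RV Z) (hz' : z' ∈ S.RV Z) : CForm S :=
  CForm.and (CForm.box I hI (Event.prim Z z hz))
    (CForm.box (updInt I Y y) hIY (Event.prim Z z' hz'))

/-- `φ` is (an instance of) the formula `Y ⇝ Z`: the disjunction, over all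
interventions `X ← x`, values `y ∈ R(Y)` and `z ≠ z' ∈ R(Z)`, of
`[X ← x](Z = z) ∧ [X ← x; Y ← y](Z = z')`. -/
def IsLeadsTo (Y Z : S.V) (φ : CForm S) : Prop :=
  ∃ l : List (CForm S),
    (∀ ψ ∈ l, ∃ (I : S.V → Option S.Val) (hI : I ∈ S.Int) (y : S.Val)
        (_ : y ∈ S.RV Y) (hIY : updInt I Y y ∈ S.Int) (z z' : S.Val)
        (hz : z ∈ S.RV Z) (hz' : z' ∈ S.RV Z), z ≠ z' ∧
        ψ = ltComp I hI Y y hIY Z z z' hz hz') ∧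
    (∀ (I : S.V → Option S.Val) (hI : I ∈ S.Int) (y : S.Val), y ∈ S.RV Y →
      ∀ (hIY : updInt I Y y ∈ S.Int) (z z' : S.Val) (hz : z ∈ S.RV Z)
        (hz' : z' ∈ S.RV Z), z ≠ z' →
        ltComp I hI Y y hIY Z z z' hz hz' ∈ l) ∧
    φ = CForm.bigOr l

/-- D6 (recursiveness): `(X₀ ⇝ X₁ ∧ … ∧ X_{k−1} ⇝ X_k) ⇒ ¬(X_k ⇝ X₀)`. -/
def AxD6 (S : Signature) : Set (CForm S) :=
  {φ | ∃ (k : ℕ) (Xs : Fin (k+1) → S.V) (fs : Fin k → CForm S) (g : CForm S),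
    (∀ i : Fin k, IsLeadsTo (Xs i.castSucc) (Xs i.succ) (fs i)) ∧
    IsLeadsTo (Xs (Fin.last k)) (Xs 0) g ∧
    φ = CForm.imp (CForm.bigAnd (List.ofFn fs)) (CForm.not g)}

/-- D7 (distribution): `([X ← x]φ ∧ [X ← x](φ ⇒ ψ)) ⇒ [X ← x]ψ`. -/
def AxD7 (S : Signature) : Set (CForm S) :=
  {φ | ∃ (I : S.V → Option S.Val) (hI : I ∈ S.Int) (a b : Event S),
    φ = CForm.imp (CForm.and (CForm.box I hI a) (CForm.box I hI (Event.imp a b)))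
          (CForm.box I hI b)}

/-- D8 (generalization): `[X ← x]φ` for `φ` a propositional tautology. -/
def AxD8 (S : Signature) : Set (CForm S) :=
  {φ | ∃ (I : S.V → Option S.Val) (hI : I ∈ S.Int) (e : Event S), e.Taut ∧
    φ = CForm.box I hI e}

/-- D9 (unique outcomes for `V − {X}`): `⟨Y ← y⟩true ∧ (⟨Y ← y⟩φ ⇒ [Y ← y]φ)`
for `Y = V − {X}`. -/
def AxD9 (S : Signature) : Set (CForm S) :=
  {φ | ∃ (I : S.V → Option S.Val) (hI : I ∈ S.Int) (X : S.V) (e : Event S),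
    I X = none ∧ (∀ Z, Z ≠ X → I Z ≠ none) ∧
    φ = CForm.and (CForm.dia I hI Event.tru)
          (CForm.imp (CForm.dia I hI e) (CForm.box I hI e))}

/-- Halpern's version of D9: `⟨Y ← y⟩true ∧ ⋁_{x ∈ R(X)} [Y ← y](X = x)`
for `Y = V − {X}`. -/
def AxHD9 (S : Signature) : Set (CForm S) :=
  {φ | ∃ (I : S.V → Option S.Val) (hI : I ∈ S.Int) (X : S.V)
      (l : List {x : S.Val // x ∈ S.RV X}),
    I X = none ∧ (∀ Z, Z ≠ X → I Z ≠ none) ∧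
    (∀ x : {x : S.Val // x ∈ S.RV X}, x ∈ l) ∧
    φ = CForm.and (CForm.dia I hI Event.tru)
          (CForm.bigOr (l.map fun x => CForm.box I hI (Event.prim X x.1 x.2)))}

/-- D10(a) (at least one outcome): `⟨Y ← y⟩true`. -/
def AxD10a (S : Signature) : Set (CForm S) :=
  {φ | ∃ (I : S.V → Option S.Val) (hI : I ∈ S.Int), φ = CForm.dia I hI Event.tru}

/-- D10(b) (at most one outcome): `⟨Y ← y⟩φ ⇒ [Y ← y]φ`. -/
def AxD10b (S : Signature) : Set (CForm S) :=
  {φ | ∃ (I : S.V → Option S.Val) (hI : I ∈ S.Int) (e : Event S),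
    φ = CForm.imp (CForm.dia I hI e) (CForm.box I hI e)}

/-! ### The axiom schema D6⁺ -/

/-- `X_{-i} = ȳ` : the conjunction of `X_j = g j` over the indices `j ≠ i`. -/
def Event.conjEqVec {k : ℕ} (Xs : Fin k → S.V)
    (g : ∀ j : Fin k, {x : S.Val // x ∈ S.RV (Xs j)}) (i : Fin k) : Event S :=
  Event.bigAnd (((List.finRange k).filter (fun j => j ≠ i)).map
    fun j => Event.prim (Xs j) (g j).1 (g j).2)

/-- A disjunct of the formula `X_i ⇝_{I',U₁,…,U_k,X₁,…,X_k} X_{−i}`: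
`[I; X_i ← x](X_{−i} = ȳ) ∧ [I; X_i ← x'](X_{−i} ≠ ȳ)`. -/
noncomputable def affComp {k : ℕ} (Xs : Fin k → S.V) (i : Fin k) (I : S.V → Option S.Val)
    (x x' : {v : S.Val // v ∈ S.RV (Xs i)})
    (hx : updInt I (Xs i) x.1 ∈ S.Int) (hx' : updInt I (Xs i) x'.1 ∈ S.Int)
    (g : ∀ j : Fin k, {v : S.Val // v ∈ S.RV (Xs j)}) : CForm S :=
  CForm.and (CForm.box (updInt I (Xs i) x.1) hx (Event.conjEqVec Xs g i))
    (CForm.box (updInt I (Xs i) x'.1) hx' (Event.not (Event.conjEqVec Xs g i)))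

/-- `φ` is (an instance of) the formula `X_i ⇝_{I',U₁,…,U_k,X₁,…,X_k} X_{−i}`. -/
def IsAffects {k : ℕ} (Xs : Fin k → S.V) (Us : Fin k → Set S.Val)
    (Is : Set (S.V → Option S.Val)) (i : Fin k) (φ : CForm S) : Prop :=
  ∃ l : List (CForm S),
    (∀ ψ ∈ l, ∃ (I : S.V → Option S.Val) (x x' : {v : S.Val // v ∈ S.RV (Xs i)})
        (hx : updInt I (Xs i) x.1 ∈ S.Int) (hx' : updInt I (Xs i) x'.1 ∈ S.Int)
        (g : ∀ j : Fin k, {v : S.Val // v ∈ S.RV (Xs j)}),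
        I ∈ Is ∧ x.1 ∈ Us i ∧ x'.1 ∈ Us i ∧ (∀ j, j ≠ i → (g j).1 ∈ Us j) ∧
        ψ = affComp Xs i I x x' hx hx' g) ∧
    (∀ (I : S.V → Option S.Val), I ∈ Is →
      ∀ (x x' : {v : S.Val // v ∈ S.RV (Xs i)})
        (hx : updInt I (Xs i) x.1 ∈ S.Int) (hx' : updInt I (Xs i) x'.1 ∈ S.Int)
        (g : ∀ j : Fin k, {v : S.Val // v ∈ S.RV (Xs j)}),
        x.1 ∈ Us i → x'.1 ∈ Us i → (∀ j, j ≠ i → (g j).1 ∈ Us j) →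
        affComp Xs i I x x' hx hx' g ∈ l) ∧
    φ = CForm.bigOr l

/-- D6⁺: `⋁_{i=1}^k ¬(X_i ⇝_{I',U₁,…,U_k,X₁,…,X_k} X_{−i})`, one instance for
each finite choice of variables `X₁,…,X_k`, finite value sets `U_i ⊆ R(X_i)`,
and finite set `I'` of allowed interventions. -/
def AxD6p (S : Signature) : Set (CForm S) :=
  {φ | ∃ (k : ℕ) (Xs : Fin k → S.V) (Us : Fin k → Set S.Val)
      (Is : Set (S.V → Option S.Val)) (fs : Fin k → CForm S),
    (∀ j, Us j ⊆ S.RV (Xs j)) ∧ (∀ j, (Us j).Finite) ∧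
    Is ⊆ S.Int ∧ Is.Finite ∧
    (∀ i, IsAffects Xs Us Is i (fs i)) ∧
    φ = CForm.bigOr (List.ofFn fun i => CForm.not (fs i))}

/-! ### Axiom systems and provability -/

def AXplus (S : Signature) : Set (CForm S) :=
  AxD0 S ∪ AxD1 S ∪ AxD2 S ∪ AxD3 S ∪ AxD4 S ∪ AxD5 S ∪ AxD7 S ∪ AxD8 S ∪ AxD9 S

def AXplusRec (S : Signature) : Set (CForm S) :=
  AxD0 S ∪ AxD1 S ∪ AxD2 S ∪ AxD3 S ∪ AxD4 S ∪ AxD6 S ∪ AxD7 S ∪ AxD8 S ∪ AxD9 S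
    ∪ AxD10a S ∪ AxD10b S

def AXbasic (S : Signature) : Set (CForm S) :=
  AxD0 S ∪ AxD1 S ∪ AxD2 S ∪ AxD4 S ∪ AxD7 S ∪ AxD8 S

def AXbasicRec (S : Signature) : Set (CForm S) := AXbasic S ∪ AxD6p S

def AXminus (S : Signature) : Set (CForm S) :=
  AxD0 S ∪ AxD2 S ∪ AxD3 S ∪ AxD6 S ∪ AxD7 S ∪ AxD8 S ∪ AxD10a S ∪ AxD10b S

def AXEQ (S : Signature) : Set (CForm S) :=
  AxD0 S ∪ AxD1 S ∪ AxD2 S ∪ AxD7 S ∪ AxD8 S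

/-- Provability from a set of axioms, with modus ponens. -/
inductive Provable (Ax : Set (CForm S)) : CForm S → Prop
  | ax {φ} : φ ∈ Ax → Provable Ax φ
  | mp {φ ψ} : Provable Ax (CForm.imp φ ψ) → Provable Ax φ → Provable Ax ψ

/-- Provability from a set of axioms, with modus ponens and the inference rule
D2⁺, relative to named variables `W`, named values `R'`, and a language `L`. -/
inductive ProvableStar (Ax : Set (CForm S)) (W : Set S.V) (R' : S.V → Set S.Val)
    (L : Set (CForm S)) : CForm S → Prop
  | ax {φ} : φ ∈ Ax → ProvableStar Ax W R' L φ
  | mp {φ ψ} : ProvableStar Ax W R' L (CForm.imp φ ψ) → ProvableStar Ax W R' L φ →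
      ProvableStar Ax W R' L ψ
  | d2plus {φ : CForm S} {I : S.V → Option S.Val} {hI : I ∈ S.Int} {ψ : Event S}
      {X : S.V} (hXW : X ∈ W)
      (l : List {x : S.Val // x ∈ S.RV X})
      (hsub : ∀ x ∈ l, x.1 ∈ R' X)
      (hmem : ∀ (x : S.Val) (hx : x ∈ S.RV X),
        (CForm.imp φ (CForm.box I hI ψ)).mentionsVal X x →
        (⟨x, hx⟩ : {x : S.Val // x ∈ S.RV X}) ∈ l)
      (hfresh : (∃ x ∈ R' X, ¬ (CForm.imp φ (CForm.box I hI ψ)).mentionsVal X x) →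
        ∃ x ∈ l, ¬ (CForm.imp φ (CForm.box I hI ψ)).mentionsVal X x.1)
      (hL : CForm.imp φ (CForm.box I hI (Event.not ψ)) ∈ L)
      (hprem : ProvableStar Ax W R' L
        (CForm.imp φ (CForm.bigAnd (l.map fun x =>
          CForm.box I hI (Event.imp ψ (Event.not (Event.prim X x.1 x.2)))))))
      : ProvableStar Ax W R' L (CForm.imp φ (CForm.box I hI (Event.not ψ)))

/-! ### Properties of GSEMs -/

/-- Coherence: if `v` is an outcome of `X ← x` and `v` agrees with a finite
extension `X ← x; Y ← y` of the intervention, then `v` is an outcome of the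
extended intervention. -/
def GSEM.Coherent (M : GSEM S) : Prop :=
  ∀ (I₁ : S.V → Option S.Val) (h₁ : I₁ ∈ S.Int) (I₂ : S.V → Option S.Val)
    (h₂ : I₂ ∈ S.Int),
    (∀ X x, I₁ X = some x → I₂ X = some x) →
    {X | I₁ X = none ∧ I₂ X ≠ none}.Finite →
    ∀ (u : Context S) (v : Assignment S), v ∈ M.F I₁ h₁ u →
      (∀ X x, I₂ X = some x → v.1 X = x) → v ∈ M.F I₂ h₂ u

/-- Condition Acyc1 for a GSEM, a context, and a strict order on the variables. -/
def GSEM.Acyc1At (M : GSEM S) (u : Context S) (lt : S.V → S.V → Prop) : Prop :=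
  ∀ (X : S.V) (x x' : S.Val), x ∈ S.RV X → x' ∈ S.RV X →
    ∀ (I : S.V → Option S.Val), I ∈ S.Int →
      ∀ (hx : updInt I X x ∈ S.Int) (hx' : updInt I X x' ∈ S.Int),
        restrictSet (M.F (updInt I X x) hx u) {Y | lt Y X}
          = restrictSet (M.F (updInt I X x') hx' u) {Y | lt Y X}

/-- An acyclic GSEM: for each context there is a total order on the endogenous
variables satisfying Acyc1. -/
def GSEM.Acyclic (M : GSEM S) : Prop :=
  ∀ u : Context S, ∃ lt : S.V → S.V → Prop, IsStrictTotalOrder S.V lt ∧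
    M.Acyc1At u lt

/-! ### Consistency and acceptability -/

/-- A set of formulas is consistent with a provability notion `Pr` if the
negation of the conjunction of no finite subset is provable. -/
def Consistent (Pr : CForm S → Prop) (C : Set (CForm S)) : Prop :=
  ∀ l : List (CForm S), (∀ ψ ∈ l, ψ ∈ C) → ¬ Pr (CForm.not (CForm.bigAnd l))

def MaxConsistent (Pr : CForm S → Prop) (C : Set (CForm S)) : Prop :=
  Consistent Pr C ∧ ∀ ψ ∉ C, ¬ Consistent Pr (insert ψ C)

/-- `C` is acceptable for `⟨Y ← y⟩φ` with respect to `Z`: some conjunctive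
formula `ψ` extends the conjuncts of `φ`, contains a conjunct `Z = z` with `z`
a named value, and `⟨Y ← y⟩ψ ∈ C`. -/
def AcceptableFor (C : Set (CForm S)) (I : S.V → Option S.Val) (hI : I ∈ S.Int)
    (φ : Event S) (R' : S.V → Set S.Val) (Z : S.V) : Prop :=
  ∃ ψ : Event S, ψ.Conjunctive ∧ φ.conjuncts ⊆ ψ.conjuncts ∧
    (∃ (z : S.Val) (hz : z ∈ S.RV Z), z ∈ R' Z ∧ Event.prim Z z hz ∈ ψ.conjuncts) ∧
    CForm.dia I hI ψ ∈ C

end Causal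

namespace Causal

variable {S : Signature}

/-- Condition Acyc1 for a SEM `M`, a context `u` and an order `lt` on the
endogenous variables: for all `X`, `x, x' ∈ R(X)` and interventions `I`,
`M(u, I; X ← x)[V_{≺ X}] = M(u, I; X ← x')[V_{≺ X}]`. -/
def SEM.Acyc1At (M : SEM S) (u : Context S) (lt : S.V → S.V → Prop) : Prop :=
  ∀ (X : S.V) (x x' : S.Val), x ∈ S.RV X → x' ∈ S.RV X →
    ∀ I : S.V → Option S.Val, ValidInt S I →
      restrictSet (M.outcomes u (updInt I X x)) {Y | lt Y X}
        = restrictSet (M.outcomes u (updInt I X x')) {Y | lt Y X}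

/-- Condition Acyc2 for a SEM `M`, a context `u` and an order `lt`: if
`Y ≺ X` then for all interventions `I` and `x, x' ∈ R(X)`,
`M(u, I; X ← x)[Y] = M(u, I; X ← x')[Y]`. -/
def SEM.Acyc2At (M : SEM S) (u : Context S) (lt : S.V → S.V → Prop) : Prop :=
  ∀ Y X : S.V, lt Y X → ∀ x x' : S.Val, x ∈ S.RV X → x' ∈ S.RV X →
    ∀ I : S.V → Option S.Val, ValidInt S I →
      projSet (M.outcomes u (updInt I X x)) Y
        = projSet (M.outcomes u (updInt I X x')) Y

/-!
Acyc1 implies Acyc2 by projecting onto a single variable. Conversely, Acyc2 applied to the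
intervention fixing everything but `Y` shows that the equation of `Y` ignores each variable
above `Y`. So, given an outcome `v` of `I; X ← x`, keep `v` below `X`, set `X` to `x'` and solve
the free equations above `X` from the bottom up: every step changes only a variable lying above
all equations already solved, and in particular nothing below `X` moves.
-/

theorem Finset.exists_minimal_of_isStrictTotalOrder {α : Type*} {r : α → α → Prop}
    [IsStrictTotalOrder α r] (D : Finset α) (hD : D.Nonempty) :
    ∃ m ∈ D, ∀ Z ∈ D, Z ≠ m → r m Z := by
  obtain ⟨⟨m, hm⟩, -, hmin⟩ :=
    (D.finite_toSet.wellFoundedOn (r := r)).has_min Set.univ ⟨⟨_, hD.choose_spec⟩, trivial⟩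
  refine ⟨m, hm, fun Z hZ hZm => ?_⟩
  rcases trichotomous_of r m Z with h | rfl | h
  · exact h
  · exact absurd rfl hZm
  · exact absurd h (hmin ⟨Z, hZ⟩ trivial)

open Classical in
noncomputable def Assignment.update (v : Assignment S) (X : S.V) (x : S.Val) (hx : x ∈ S.RV X) :
    Assignment S :=
  ⟨Function.update v.1 X x, fun W => by
    by_cases h : W = X
    · subst h; simpa using hx
    · simpa [h] using v.2 W⟩

@[simp]
theorem Assignment.update_apply_self (v : Assignment S) (X : S.V) (x : S.Val)
    (hx : x ∈ S.RV X) : (v.update X x hx).1 X = x := by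
  simp [Assignment.update]

@[simp]
theorem Assignment.update_apply_of_ne (v : Assignment S) {X W : S.V} (x : S.Val)
    (hx : x ∈ S.RV X) (h : W ≠ X) : (v.update X x hx).1 W = v.1 W := by
  simp [Assignment.update, h]

theorem Assignment.update_eq_self (v : Assignment S) (X : S.V) :
    v.update X (v.1 X) (v.2 X) = v := by
  apply Subtype.ext
  simp [Assignment.update]

open Classical in
/-- The intervention `V - {Y} ← v`. -/
noncomputable def fixExcept (v : Assignment S) (Y : S.V) : S.V → Option S.Val :=
  fun W => if W = Y then none else some (v.1 W)

theorem validInt_fixExcept (v : Assignment S) (Y : S.V) : ValidInt S (fixExcept v Y) := by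
  intro W w hw
  by_cases h : W = Y
  · simp [fixExcept, h] at hw
  · simp only [fixExcept, h, if_false, Option.some.injEq] at hw
    exact hw ▸ v.2 W

theorem updInt_fixExcept (v : Assignment S) {Y Z : S.V} (hZY : Z ≠ Y) {z : S.Val}
    (hz : z ∈ S.RV Z) : updInt (fixExcept v Y) Z z = fixExcept (v.update Z z hz) Y := by
  funext W
  by_cases hWZ : W = Z
  · subst hWZ; simp [updInt, fixExcept, hZY]
  · simp [updInt, fixExcept, hWZ]

theorem updInt_apply_self (I : S.V → Option S.Val) (X : S.V) (x : S.Val) :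
    updInt I X x X = some x := by
  simp [updInt]

theorem updInt_apply_of_ne (I : S.V → Option S.Val) {X W : S.V} (x : S.Val) (h : W ≠ X) :
    updInt I X x W = I W := by
  simp [updInt, h]

theorem validInt_updInt {I : S.V → Option S.Val} (hI : ValidInt S I) {X : S.V} {x : S.Val}
    (hx : x ∈ S.RV X) : ValidInt S (updInt I X x) := by
  intro W w hw
  by_cases h : W = X
  · subst h; rw [updInt_apply_self, Option.some.injEq] at hw; exact hw ▸ hx
  · rw [updInt_apply_of_ne I x h] at hw; exact hI W w hw

namespace SEM

/-- An intervention `I W = some c` replaces the equation of `W` by `W = c`. -/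
def SolvesAt (M : SEM S) (u : Context S) (I : S.V → Option S.Val) (v : Assignment S)
    (W : S.V) : Prop :=
  v.1 W = (I W).getD (M.F W u.1 v.1)

theorem mem_outcomes_iff (M : SEM S) (u : Context S) (I : S.V → Option S.Val)
    (v : Assignment S) : v ∈ M.outcomes u I ↔ ∀ W, M.SolvesAt u I v W := by
  refine forall_congr' fun W => ?_
  cases h : I W <;> simp [SolvesAt, h]

theorem F_update_self (M : SEM S) (u : Context S) (v : Assignment S) (X : S.V) {x : S.Val}
    (hx : x ∈ S.RV X) : M.F X u.1 (v.update X x hx).1 = M.F X u.1 v.1 :=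
  M.F_indep_self X u.1 _ _ fun _ hW => v.update_apply_of_ne x hx hW

theorem projSet_outcomes_fixExcept (M : SEM S) (u : Context S) (v : Assignment S) (Y : S.V) :
    projSet (M.outcomes u (fixExcept v Y)) Y = {M.F Y u.1 v.1} := by
  ext y
  simp only [projSet, Set.mem_image, Set.mem_singleton_iff, mem_outcomes_iff, SolvesAt]
  constructor
  · rintro ⟨t, ht, rfl⟩
    have hagree : ∀ W, W ≠ Y → t.1 W = v.1 W := fun W hW => by simpa [fixExcept, hW] using ht W
    simpa [fixExcept, M.F_indep_self Y u.1 t.1 v.1 hagree] using ht Y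
  · rintro rfl
    refine ⟨v.update Y _ (M.F_range Y u.1 v.1), fun W => ?_, by simp⟩
    by_cases hW : W = Y
    · subst hW; simp [fixExcept, F_update_self]
    · simp [fixExcept, hW]

variable {M : SEM S} {u : Context S} {lt : S.V → S.V → Prop}

theorem F_update_of_lt [Std.Irrefl lt] (h2 : M.Acyc2At u lt) {Y Z : S.V} (hYZ : lt Y Z)
    (v : Assignment S) {z : S.Val} (hz : z ∈ S.RV Z) :
    M.F Y u.1 (v.update Z z hz).1 = M.F Y u.1 v.1 := by
  have hZY : Z ≠ Y := ne_of_irrefl' hYZ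
  refine (Set.singleton_eq_singleton_iff.mp ?_).symm
  calc {M.F Y u.1 v.1}
      = projSet (M.outcomes u (updInt (fixExcept v Y) Z (v.1 Z))) Y := by
        rw [updInt_fixExcept v hZY (v.2 Z), v.update_eq_self, projSet_outcomes_fixExcept]
    _ = projSet (M.outcomes u (updInt (fixExcept v Y) Z z)) Y :=
        h2 Y Z hYZ _ _ (v.2 Z) hz _ (validInt_fixExcept v Y)
    _ = {M.F Y u.1 (v.update Z z hz).1} := by
        rw [updInt_fixExcept v hZY hz, projSet_outcomes_fixExcept]

theorem SolvesAt.update_of_lt [Std.Irrefl lt] (h2 : M.Acyc2At u lt) {I : S.V → Option S.Val}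
    {v : Assignment S} {W Z : S.V} (hv : M.SolvesAt u I v W) (hWZ : lt W Z) {z : S.Val}
    (hz : z ∈ S.RV Z) : M.SolvesAt u I (v.update Z z hz) W := by
  rw [SolvesAt, F_update_of_lt h2 hWZ, v.update_apply_of_ne z hz (ne_of_irrefl hWZ)]
  exact hv

theorem getD_F_mem_RV {I : S.V → Option S.Val} (hI : ValidInt S I) (M : SEM S) (u : Context S)
    (v : Assignment S) (W : S.V) : (I W).getD (M.F W u.1 v.1) ∈ S.RV W := by
  cases h : I W
  · exact M.F_range W u.1 v.1
  · exact hI W _ h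

theorem solvesAt_update_getD {I : S.V → Option S.Val} (hI : ValidInt S I) (v : Assignment S)
    (W : S.V) : M.SolvesAt u I (v.update W _ (getD_F_mem_RV hI M u v W)) W := by
  rw [SolvesAt, F_update_self, Assignment.update_apply_self]

theorem exists_mem_outcomes_agree_off [IsStrictTotalOrder S.V lt] (h2 : M.Acyc2At u lt)
    {I : S.V → Option S.Val} (hI : ValidInt S I) (D : Finset S.V) (v : Assignment S)
    (hv : ∀ W ∉ D, M.SolvesAt u I v W) (hD : ∀ W ∉ D, I W = none → ∀ Z ∈ D, lt W Z) :
    ∃ w ∈ M.outcomes u I, ∀ W ∉ D, w.1 W = v.1 W := by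
  classical
  induction D using Finset.strongInduction generalizing v with
  | H D ih =>
  rcases D.eq_empty_or_nonempty with rfl | hne
  · exact ⟨v, (mem_outcomes_iff M u I v).2 fun W => hv W (Finset.notMem_empty W),
      fun _ _ => rfl⟩
  obtain ⟨m, hmD, hmin⟩ := Finset.exists_minimal_of_isStrictTotalOrder (r := lt) D hne
  set v' := v.update m _ (getD_F_mem_RV hI M u v m)
  have hv' : ∀ W ∉ D.erase m, M.SolvesAt u I v' W := by
    intro W hW
    by_cases hWm : W = m
    · subst hWm; exact solvesAt_update_getD hI v W
    have hWD : W ∉ D := fun h => hW (Finset.mem_erase.2 ⟨hWm, h⟩)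
    cases hIW : I W with
    | none => exact (hv W hWD).update_of_lt h2 (hD W hWD hIW m hmD) _
    | some c =>
      rw [SolvesAt, hIW, Option.getD_some, v.update_apply_of_ne _ _ hWm]
      simpa [SolvesAt, hIW] using hv W hWD
  have hD' : ∀ W ∉ D.erase m, I W = none → ∀ Z ∈ D.erase m, lt W Z := by
    intro W hW hIW Z hZ
    obtain ⟨hZm, hZD⟩ := Finset.mem_erase.1 hZ
    by_cases hWm : W = m
    · subst hWm; exact hmin Z hZD hZm
    · exact hD W (fun h => hW (Finset.mem_erase.2 ⟨hWm, h⟩)) hIW Z hZD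
  obtain ⟨w, hw, hwv'⟩ := ih _ (Finset.erase_ssubset hmD) v' hv' hD'
  refine ⟨w, hw, fun W hW => ?_⟩
  have hWm : W ≠ m := fun h => hW (h ▸ hmD)
  rw [hwv' W (fun h => hW (Finset.mem_of_mem_erase h)), v.update_apply_of_ne _ _ hWm]

theorem restrictSet_outcomes_updInt_subset [Finite S.V] [IsStrictTotalOrder S.V lt]
    (h2 : M.Acyc2At u lt) {I : S.V → Option S.Val} (hI : ValidInt S I) (X : S.V)
    (x : S.Val) {x' : S.Val} (hx' : x' ∈ S.RV X) :
    restrictSet (M.outcomes u (updInt I X x)) {Y | lt Y X}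
      ⊆ restrictSet (M.outcomes u (updInt I X x')) {Y | lt Y X} := by
  rintro _ ⟨v, hv, rfl⟩
  have hbelow : ∀ W, ¬ lt X W → W ≠ X → lt W X := fun W hXW hWX =>
    (trichotomous_of lt W X).resolve_right (not_or.2 ⟨hWX, hXW⟩)
  set D := (Set.toFinite {W | lt X W}).toFinset
  have hD : ∀ W, W ∉ D ↔ ¬ lt X W := fun W => by simp [D]
  have hv₀ : ∀ W ∉ D, M.SolvesAt u (updInt I X x') (v.update X x' hx') W := by
    intro W hW
    by_cases hWX : W = X
    · subst hWX; simp [SolvesAt, updInt_apply_self]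
    · have hvW := (mem_outcomes_iff M u _ v).1 hv W
      rw [SolvesAt, updInt_apply_of_ne I x hWX] at hvW
      refine SolvesAt.update_of_lt h2 ?_ (hbelow W ((hD W).1 hW) hWX) hx'
      rwa [SolvesAt, updInt_apply_of_ne I x' hWX]
  have hfree : ∀ W ∉ D, updInt I X x' W = none → ∀ Z ∈ D, lt W Z := by
    intro W hW hIW Z hZ
    have hWX : W ≠ X := by rintro rfl; simp [updInt_apply_self] at hIW
    exact _root_.trans (hbelow W ((hD W).1 hW) hWX) (by simpa [D] using hZ)
  obtain ⟨w, hw, hwv⟩ :=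
    exists_mem_outcomes_agree_off h2 (validInt_updInt hI hx') D _ hv₀ hfree
  refine ⟨w, hw, funext fun ⟨Y, hYX⟩ => ?_⟩
  change w.1 Y = v.1 Y
  rw [hwv Y ((hD Y).2 (asymm hYX)), v.update_apply_of_ne _ _ (ne_of_irrefl hYX)]

end SEM

theorem projSet_eq_image_restrictSet (T : Set (Assignment S)) {Ws : Set S.V} {Y : S.V}
    (hY : Y ∈ Ws) : projSet T Y = (fun f : Ws → S.Val => f ⟨Y, hY⟩) '' restrictSet T Ws := by
  rw [restrictSet, Set.image_image]
  rfl

/-- Let `M` be a SEM, `u` a fixed context, and `≺_u` a total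
order on the endogenous variables. Then `≺_u` satisfies Acyc1 for `M` in
context `u` iff it satisfies Acyc2 for `M` in context `u`. -/
theorem sem_acyc1_iff_acyc2 (S : Signature) (hfin : S.IsFinite) (M : SEM S)
    (u : Context S) (lt : S.V → S.V → Prop) (hlt : IsStrictTotalOrder S.V lt) :
    M.Acyc1At u lt ↔ M.Acyc2At u lt := by
  refine ⟨fun h1 Y X hYX x x' hx hx' I hI => ?_, fun h2 X x x' hx hx' I hI => ?_⟩
  · have hY : Y ∈ {W | lt W X} := hYX
    rw [projSet_eq_image_restrictSet _ hY, projSet_eq_image_restrictSet _ hY,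
      h1 X x x' hx hx' I hI]
  · have := hfin.2.1
    exact (SEM.restrictSet_outcomes_updInt_subset h2 hI X x hx').antisymm
      (SEM.restrictSet_outcomes_updInt_subset h2 hI X x' hx)

end Causal
end

section
/- If S is a finite signature, then the axiom system AX+_basic(S) is sound and complete for the language L(S) with respect to the class of all GSEMs with signature S: a causal formula of L(S) is provable in AX+_basic(S) if and only if it is valid in every GSEM with signature S. -/
namespace Causal

variable {S : Signature}

/-! ### Basic evaluation lemmas -/

lemma Event.sat_bigAnd (v : Assignment S) (l : List (Event S)) :
    (Event.bigAnd l).sat v ↔ ∀ a ∈ l, a.sat v := by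
  induction l with
  | nil => simp [Event.bigAnd, Event.sat]
  | cons a l ih => simp [Event.bigAnd, Event.sat] at ih ⊢; tauto

lemma Event.evalB_bigAnd (val : S.V → S.Val → Bool) (l : List (Event S)) :
    Event.evalB val (Event.bigAnd l) = true ↔ ∀ a ∈ l, Event.evalB val a = true := by
  induction l with
  | nil => simp [Event.bigAnd, Event.evalB]
  | cons a l ih => simp [Event.bigAnd, Event.evalB] at ih ⊢; tauto

lemma Event.sat_bigOr (v : Assignment S) (l : List (Event S)) :
    (Event.bigOr l).sat v ↔ ∃ a ∈ l, a.sat v := by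
  induction l with
  | nil => simp [Event.bigOr, Event.sat]
  | cons a l ih =>
      have hc : Event.bigOr (a :: l) = Event.or a (Event.bigOr l) := rfl
      rw [hc]; simp [Event.sat, ih]

lemma Event.evalB_bigOr (val : S.V → S.Val → Bool) (l : List (Event S)) :
    Event.evalB val (Event.bigOr l) = true ↔ ∃ a ∈ l, Event.evalB val a = true := by
  induction l with
  | nil => simp [Event.bigOr, Event.evalB]
  | cons a l ih =>
      have hc : Event.bigOr (a :: l) = Event.or a (Event.bigOr l) := rfl
      rw [hc]; simp [Event.evalB, ih]

lemma CForm.evalB_bigAnd (val : (S.V → Option S.Val) → Event S → Bool)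
    (l : List (CForm S)) :
    CForm.evalB val (CForm.bigAnd l) = true ↔ ∀ a ∈ l, CForm.evalB val a = true := by
  induction l with
  | nil => simp [CForm.bigAnd, CForm.evalB]
  | cons a l ih => simp [CForm.bigAnd, CForm.evalB] at ih ⊢; tauto

open Classical in
/-- The canonical Boolean valuation associated with an outcome map. -/
noncomputable def valOf
    (O : (I : S.V → Option S.Val) → I ∈ S.Int → Context S → Set (Assignment S))
    (u : Context S) : (S.V → Option S.Val) → Event S → Bool :=
  fun I e => decide (∀ hI : I ∈ S.Int, ∀ v ∈ O I hI u, e.sat v)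

lemma valOf_spec
    (O : (I : S.V → Option S.Val) → I ∈ S.Int → Context S → Set (Assignment S))
    (u : Context S) {I : S.V → Option S.Val} (hI : I ∈ S.Int) (e : Event S) :
    valOf O u I e = true ↔ ∀ v ∈ O I hI u, e.sat v := by
  simp only [valOf, decide_eq_true_eq]
  exact ⟨fun h => h hI, fun h _ => h⟩

lemma CForm.sat_iff_evalB
    (O : (I : S.V → Option S.Val) → I ∈ S.Int → Context S → Set (Assignment S))
    (u : Context S) (ψ : CForm S) :
    CForm.sat O u ψ ↔ CForm.evalB (valOf O u) ψ = true := by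
  induction ψ with
  | tru => simp [CForm.sat, CForm.evalB]
  | box I hI e =>
      simp only [CForm.sat, CForm.evalB, valOf, decide_eq_true_eq]
      constructor
      · intro h hI'; exact h
      · intro h; exact h hI
  | not ψ ih => simp [CForm.sat, CForm.evalB, ih]
  | and a b iha ihb => simp [CForm.sat, CForm.evalB, iha, ihb]
  | or a b iha ihb => simp [CForm.sat, CForm.evalB, iha, ihb]

open Classical in
/-- The canonical Boolean valuation associated with an assignment. -/
noncomputable def canonVal (v : Assignment S) : S.V → S.Val → Bool :=
  fun X x => decide (v.1 X = x)

lemma Event.evalB_canon (v : Assignment S) (e : Event S) :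
    Event.evalB (canonVal v) e = true ↔ e.sat v := by
  induction e with
  | tru => simp [Event.evalB, Event.sat]
  | prim X x hx => simp [Event.evalB, Event.sat, canonVal]
  | not e ih => simp [Event.evalB, Event.sat, ← ih]
  | and a b iha ihb => simp [Event.evalB, Event.sat, iha, ihb]
  | or a b iha ihb => simp [Event.evalB, Event.sat, iha, ihb]

lemma Event.Taut.sat {e : Event S} (h : e.Taut) (v : Assignment S) : e.sat v :=
  (Event.evalB_canon v e).1 (h _)

/-! ### Membership in AXbasic -/

lemma mem_AXbasic_d0 {φ : CForm S} (h : φ ∈ AxD0 S) : φ ∈ AXbasic S := by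
  simp [AXbasic, Set.mem_union]; tauto

lemma mem_AXbasic_d1 {φ : CForm S} (h : φ ∈ AxD1 S) : φ ∈ AXbasic S := by
  simp [AXbasic, Set.mem_union]; tauto

lemma mem_AXbasic_d2 {φ : CForm S} (h : φ ∈ AxD2 S) : φ ∈ AXbasic S := by
  simp [AXbasic, Set.mem_union]; tauto

lemma mem_AXbasic_d4 {φ : CForm S} (h : φ ∈ AxD4 S) : φ ∈ AXbasic S := by
  simp [AXbasic, Set.mem_union]; tauto

lemma mem_AXbasic_d7 {φ : CForm S} (h : φ ∈ AxD7 S) : φ ∈ AXbasic S := by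
  simp [AXbasic, Set.mem_union]; tauto

lemma mem_AXbasic_d8 {φ : CForm S} (h : φ ∈ AxD8 S) : φ ∈ AXbasic S := by
  simp [AXbasic, Set.mem_union]; tauto

/-! ### Propositional reasoning engine -/

lemma provable_taut {φ : CForm S} (h : φ.Taut) : Provable (AXbasic S) φ :=
  Provable.ax (mem_AXbasic_d0 h)

/-- Tautological consequence: if `φ` is a Boolean consequence of a list of
provable formulas, then `φ` is provable. -/
lemma provable_of_tc (l : List (CForm S)) (φ : CForm S)
    (hl : ∀ ψ ∈ l, Provable (AXbasic S) ψ)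
    (htc : ∀ val, (∀ ψ ∈ l, CForm.evalB val ψ = true) → CForm.evalB val φ = true) :
    Provable (AXbasic S) φ := by
  induction l generalizing φ with
  | nil => exact provable_taut (fun val => htc val (by simp))
  | cons a l ih =>
      have h1 : Provable (AXbasic S) (CForm.imp a φ) := by
        refine ih _ (fun ψ hψ => hl ψ (by simp [hψ])) ?_
        intro val hv
        simp only [CForm.imp, CForm.evalB, Bool.or_eq_true, Bool.not_eq_true']
        by_cases ha : CForm.evalB val a = true
        · right
          exact htc val (by
            intro ψ hψ
            rcases List.mem_cons.1 hψ with h | h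
            · exact h ▸ ha
            · exact hv ψ h)
        · left; exact Bool.not_eq_true _ ▸ (by revert ha; cases CForm.evalB val a <;> simp)
      exact Provable.mp h1 (hl a (by simp))

/-! ### Boxed reasoning -/

variable {I : S.V → Option S.Val} {hI : I ∈ S.Int}

lemma provable_d8 (e : Event S) (h : e.Taut) :
    Provable (AXbasic S) (CForm.box I hI e) :=
  Provable.ax (mem_AXbasic_d8 ⟨I, hI, e, h, rfl⟩)

lemma provable_d7 (a b : Event S) :
    Provable (AXbasic S)
      (CForm.imp (CForm.and (CForm.box I hI a) (CForm.box I hI (Event.imp a b)))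
        (CForm.box I hI b)) :=
  Provable.ax (mem_AXbasic_d7 ⟨I, hI, a, b, rfl⟩)

lemma box_mp {a b : Event S}
    (h1 : Provable (AXbasic S) (CForm.box I hI a))
    (h2 : Provable (AXbasic S) (CForm.box I hI (Event.imp a b))) :
    Provable (AXbasic S) (CForm.box I hI b) := by
  refine provable_of_tc
    [CForm.box I hI a, CForm.box I hI (Event.imp a b),
     CForm.imp (CForm.and (CForm.box I hI a) (CForm.box I hI (Event.imp a b)))
        (CForm.box I hI b)] _ ?_ ?_
  · intro ψ hψ
    rcases List.mem_cons.1 hψ with h | hψ; · exact h ▸ h1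
    rcases List.mem_cons.1 hψ with h | hψ; · exact h ▸ h2
    rcases List.mem_cons.1 hψ with h | hψ
    · exact h ▸ provable_d7 a b
    · simp at hψ
  · intro val hv
    simp only [List.forall_mem_cons] at hv
    obtain ⟨ha, hab, hd7, -⟩ := hv
    simp only [CForm.imp, CForm.evalB, Bool.or_eq_true, Bool.not_eq_true', Bool.and_eq_false_iff, Bool.eq_false_iff, ne_eq, Bool.and_eq_true,
      Bool.and_eq_true] at ha hab hd7 ⊢
    tauto

lemma box_mono {a b : Event S}
    (h1 : Provable (AXbasic S) (CForm.box I hI a)) (ht : (Event.imp a b).Taut) :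
    Provable (AXbasic S) (CForm.box I hI b) :=
  box_mp h1 (provable_d8 _ ht)

lemma box_conj {a b : Event S}
    (h1 : Provable (AXbasic S) (CForm.box I hI a))
    (h2 : Provable (AXbasic S) (CForm.box I hI b)) :
    Provable (AXbasic S) (CForm.box I hI (Event.and a b)) := by
  have hta : (Event.imp a (Event.imp b (Event.and a b))).Taut := by
    intro val
    simp only [Event.imp, Event.evalB, Bool.or_eq_true, Bool.not_eq_true', Bool.and_eq_false_iff, Bool.eq_false_iff, ne_eq, Bool.and_eq_true,
      Bool.and_eq_true]
    by_cases ha : Event.evalB val a = true <;>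
      by_cases hb : Event.evalB val b = true <;> simp_all
  exact box_mp h2 (box_mp h1 (provable_d8 _ hta))

lemma box_bigAnd {l : List (Event S)}
    (h : ∀ a ∈ l, Provable (AXbasic S) (CForm.box I hI a)) :
    Provable (AXbasic S) (CForm.box I hI (Event.bigAnd l)) := by
  induction l with
  | nil => exact provable_d8 _ (fun val => rfl)
  | cons a l ih =>
      exact box_conj (h a (by simp)) (ih (fun b hb => h b (by simp [hb])))

/-- From a conjunction of boxes to the box of the conjunction. -/
lemma imp_box_bigAnd (l : List (Event S)) :
    Provable (AXbasic S)
      (CForm.imp (CForm.bigAnd (l.map (CForm.box I hI)))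
        (CForm.box I hI (Event.bigAnd l))) := by
  induction l with
  | nil =>
      refine provable_of_tc [CForm.box I hI (Event.bigAnd [])] _ ?_ ?_
      · intro ψ hψ
        rcases List.mem_cons.1 hψ with h | h
        · exact h ▸ provable_d8 _ (fun val => rfl)
        · simp at h
      · intro val hv
        simp only [List.forall_mem_cons] at hv
        obtain ⟨h1, -⟩ := hv
        simp only [CForm.imp, CForm.evalB, List.map_nil, CForm.bigAnd,
          List.foldr_nil, Bool.or_eq_true] at h1 ⊢
        tauto
  | cons a l ih =>
      set A := Event.bigAnd l with hA
      have χ1 : Provable (AXbasic S)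
          (CForm.box I hI (Event.imp a (Event.imp A (Event.and a A)))) := by
        refine provable_d8 _ (fun val => ?_)
        simp only [Event.imp, Event.evalB, Bool.or_eq_true, Bool.not_eq_true', Bool.and_eq_false_iff, Bool.eq_false_iff, ne_eq, Bool.and_eq_true,
          Bool.and_eq_true]
        by_cases ha : Event.evalB val a = true <;>
          by_cases hb : Event.evalB val A = true <;> simp_all
      refine provable_of_tc
        [CForm.imp (CForm.bigAnd (l.map (CForm.box I hI))) (CForm.box I hI A),
         CForm.box I hI (Event.imp a (Event.imp A (Event.and a A))),
         CForm.imp (CForm.and (CForm.box I hI a)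
            (CForm.box I hI (Event.imp a (Event.imp A (Event.and a A)))))
           (CForm.box I hI (Event.imp A (Event.and a A))),
         CForm.imp (CForm.and (CForm.box I hI A)
            (CForm.box I hI (Event.imp A (Event.and a A))))
           (CForm.box I hI (Event.and a A))] _ ?_ ?_
      · intro ψ hψ
        rcases List.mem_cons.1 hψ with h | hψ; · exact h ▸ ih
        rcases List.mem_cons.1 hψ with h | hψ; · exact h ▸ χ1
        rcases List.mem_cons.1 hψ with h | hψ; · exact h ▸ provable_d7 _ _
        rcases List.mem_cons.1 hψ with h | hψ; · exact h ▸ provable_d7 _ _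
        simp at hψ
      · intro val hv
        simp only [List.forall_mem_cons] at hv
        obtain ⟨h1, h2, h3, h4, -⟩ := hv
        show CForm.evalB val (CForm.imp
          (CForm.bigAnd ((a :: l).map (CForm.box I hI)))
          (CForm.box I hI (Event.bigAnd (a :: l)))) = true
        have hc : Event.bigAnd (a :: l) = Event.and a A := rfl
        have hc2 : CForm.bigAnd ((a :: l).map (CForm.box I hI))
            = CForm.and (CForm.box I hI a) (CForm.bigAnd (l.map (CForm.box I hI))) := rfl
        rw [hc, hc2]
        simp only [CForm.imp, CForm.evalB, Bool.or_eq_true, Bool.not_eq_true', Bool.and_eq_false_iff, Bool.eq_false_iff, ne_eq, Bool.and_eq_true,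
          Bool.and_eq_true] at h1 h2 h3 h4 ⊢
        tauto

/-- If every conjunct is provably implied by `A`, so is the conjunction. -/
lemma imp_bigAnd {A : CForm S} {l : List (CForm S)}
    (h : ∀ ψ ∈ l, Provable (AXbasic S) (CForm.imp A ψ)) :
    Provable (AXbasic S) (CForm.imp A (CForm.bigAnd l)) := by
  induction l with
  | nil =>
      refine provable_of_tc [] _ (by simp) ?_
      intro val _
      simp [CForm.imp, CForm.evalB, CForm.bigAnd]
  | cons a l ih =>
      refine provable_of_tc [CForm.imp A a, CForm.imp A (CForm.bigAnd l)] _ ?_ ?_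
      · intro ψ hψ
        rcases List.mem_cons.1 hψ with h' | hψ; · exact h' ▸ h a (by simp)
        rcases List.mem_cons.1 hψ with h' | hψ
        · exact h' ▸ ih (fun b hb => h b (by simp [hb]))
        · simp at hψ
      · intro val hv
        simp only [List.forall_mem_cons] at hv
        obtain ⟨h1, h2, -⟩ := hv
        have hc : CForm.bigAnd (a :: l) = CForm.and a (CForm.bigAnd l) := rfl
        rw [hc]
        simp only [CForm.imp, CForm.evalB, Bool.or_eq_true, Bool.not_eq_true', Bool.and_eq_false_iff, Bool.eq_false_iff, ne_eq, Bool.and_eq_true,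
          Bool.and_eq_true] at h1 h2 ⊢
        tauto

/-! ### Soundness -/

lemma sound {φ : CForm S} (h : Provable (AXbasic S) φ) (M : GSEM S) : M.Valid φ := by
  induction h with
  | mp h1 h2 ih1 ih2 =>
      intro u
      have ha := ih1 u
      have hb := ih2 u
      simp only [GSEM.sat, CForm.imp, CForm.sat] at ha hb ⊢
      tauto
  | ax hφ =>
      intro u
      simp only [AXbasic, Set.mem_union] at hφ
      rcases hφ with ((((h | h) | h) | h) | h) | h
      · -- D0
        exact (CForm.sat_iff_evalB M.F u _).2 (h _)
      · -- D1
        obtain ⟨I, hI, X, x, x', hx, hx', hne, rfl⟩ := h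
        intro v _
        simp only [Event.imp, Event.sat]
        by_cases hvx : v.1 X = x
        · right; rw [hvx]; exact fun hc => hne hc
        · left; exact hvx
      · -- D2
        obtain ⟨I, hI, X, l, hl, rfl⟩ := h
        intro v _
        rw [show Event.disjEq X l = Event.bigOr (l.map fun x => Event.prim X x.1 x.2)
          from rfl, Event.sat_bigOr]
        exact ⟨_, List.mem_map.2 ⟨⟨v.1 X, v.2 X⟩, hl _, rfl⟩, rfl⟩
      · -- D4
        obtain ⟨I, hI, X, x, hx, hIX, rfl⟩ := h
        intro v hv
        exact M.effective I hI u v hv X x hIX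
      · -- D7
        obtain ⟨I, hI, a, b, rfl⟩ := h
        simp only [GSEM.sat, CForm.imp, CForm.sat]
        by_cases hab : CForm.sat M.F u (CForm.and (CForm.box I hI a)
          (CForm.box I hI (Event.imp a b)))
        · right
          obtain ⟨ha, hab⟩ := hab
          intro v hv
          have h1 := ha v hv
          have h2 := hab v hv
          simp only [Event.imp, Event.sat] at h2
          tauto
        · left; exact hab
      · -- D8
        obtain ⟨I, hI, e, he, rfl⟩ := h
        intro v _
        exact he.sat v

/-! ### Finite enumeration machinery -/

section Complete

variable (lV : List S.V) (lR : ∀ X : S.V, List {x : S.Val // x ∈ S.RV X})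

/-- The conjunction `⋀_{X ∈ lV} X = v(X)` describing the assignment `v`. -/
def delta (v : Assignment S) : Event S :=
  Event.bigAnd (lV.map fun X => Event.prim X (v.1 X) (v.2 X))

lemma sat_delta (hlV : ∀ X, X ∈ lV) (v w : Assignment S) :
    (delta lV v).sat w ↔ w = v := by
  rw [delta, Event.sat_bigAnd]
  constructor
  · intro h
    refine Subtype.ext (funext fun X => ?_)
    exact h _ (List.mem_map.2 ⟨X, hlV X, rfl⟩)
  · rintro rfl a ha
    obtain ⟨X, -, rfl⟩ := List.mem_map.1 ha
    simp [Event.sat]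

lemma evalB_delta (val : S.V → S.Val → Bool) (v : Assignment S) :
    Event.evalB val (delta lV v) = true ↔ ∀ X ∈ lV, val X (v.1 X) = true := by
  rw [delta, Event.evalB_bigAnd]
  constructor
  · intro h X hX
    exact h _ (List.mem_map.2 ⟨X, hX, rfl⟩)
  · intro h a ha
    obtain ⟨X, hX, rfl⟩ := List.mem_map.1 ha
    exact h X hX

/-- Truth of an event under a Boolean valuation that picks out the
assignment `v` coincides with satisfaction by `v`. -/
lemma evalB_eq_sat (val : S.V → S.Val → Bool) (v : Assignment S)
    (h1 : ∀ X, val X (v.1 X) = true)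
    (h2 : ∀ X x, x ∈ S.RV X → x ≠ v.1 X → val X x = false) :
    ∀ e : Event S, Event.evalB val e = true ↔ e.sat v := by
  intro e
  induction e with
  | tru => simp [Event.evalB, Event.sat]
  | prim X x hx =>
      simp only [Event.evalB, Event.sat]
      by_cases hxv : x = v.1 X
      · subst hxv; simp [h1 X]
      · rw [h2 X x hx hxv]
        simp only [Bool.false_eq_true, false_iff]
        exact fun hc => hxv hc.symm
  | not e ih => simp [Event.evalB, Event.sat, ← ih]
  | and a b iha ihb => simp [Event.evalB, Event.sat, iha, ihb]
  | or a b iha ihb => simp [Event.evalB, Event.sat, iha, ihb]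

open Classical in
/-- All instances of functionality (D1) over the named values. -/
noncomputable def d1List : List (Event S) :=
  lV.flatMap fun X => (lR X).flatMap fun x => (lR X).filterMap fun x' =>
    if x.1 = x'.1 then none
    else some (Event.imp (Event.prim X x.1 x.2) (Event.not (Event.prim X x'.1 x'.2)))

/-- All instances of definiteness (D2). -/
noncomputable def d2List : List (Event S) := lV.map fun X => Event.disjEq X (lR X)

/-- All instances of effectiveness (D4) for the intervention `I`. -/
noncomputable def d4List (I : S.V → Option S.Val) (hI : I ∈ S.Int) : List (Event S) :=
  lV.filterMap fun X =>
    match hXI : I X with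
    | some x => some (Event.prim X x (S.Int_ok I hI X x hXI))
    | none => none

/-- The list of all "base facts" that hold in every outcome of `I`. -/
noncomputable def baseList (I : S.V → Option S.Val) (hI : I ∈ S.Int) : List (Event S) :=
  d1List lV lR ++ d2List lV lR ++ d4List lV I hI

lemma mem_d1List (hlV : ∀ X, X ∈ lV) (hlR : ∀ X (x : {x : S.Val // x ∈ S.RV X}), x ∈ lR X)
    {X : S.V} {x x' : S.Val} (hx : x ∈ S.RV X) (hx' : x' ∈ S.RV X) (hne : x ≠ x') :
    Event.imp (Event.prim X x hx) (Event.not (Event.prim X x' hx')) ∈ d1List lV lR := by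
  refine List.mem_flatMap.2 ⟨X, hlV X, List.mem_flatMap.2 ⟨⟨x, hx⟩, hlR X _,
    List.mem_filterMap.2 ⟨⟨x', hx'⟩, hlR X _, ?_⟩⟩⟩
  rw [if_neg hne]

lemma mem_d4List (hlV : ∀ X, X ∈ lV) {I : S.V → Option S.Val} (hI : I ∈ S.Int)
    {X : S.V} {x : S.Val} (hIX : I X = some x) :
    Event.prim X x (S.Int_ok I hI X x hIX) ∈ d4List lV I hI := by
  refine List.mem_filterMap.2 ⟨X, hlV X, ?_⟩
  split
  next x' h' =>
    rw [hIX] at h'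
    obtain rfl : x = x' := Option.some.inj h'
    rfl
  next h' => rw [hIX] at h'; exact absurd h' (by simp)

/-- Every base fact is provably boxed. -/
lemma boxed_base (hlR : ∀ X (x : {x : S.Val // x ∈ S.RV X}), x ∈ lR X)
    {I : S.V → Option S.Val} (hI : I ∈ S.Int) :
    ∀ a ∈ baseList lV lR I hI, Provable (AXbasic S) (CForm.box I hI a) := by
  intro a ha
  rw [baseList, List.append_assoc] at ha
  rcases List.mem_append.1 ha with h | h
  · -- D1
    obtain ⟨X, hX, h⟩ := List.mem_flatMap.1 h
    obtain ⟨x, hxm, h⟩ := List.mem_flatMap.1 h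
    obtain ⟨x', hx'm, heq⟩ := List.mem_filterMap.1 h
    split at heq
    · exact absurd heq (by simp)
    next hne =>
      obtain rfl := Option.some.inj heq
      exact Provable.ax (mem_AXbasic_d1 ⟨I, hI, X, x.1, x'.1, x.2, x'.2, hne, rfl⟩)
  rcases List.mem_append.1 h with h | h
  · -- D2
    obtain ⟨X, hX, rfl⟩ := List.mem_map.1 h
    exact Provable.ax (mem_AXbasic_d2 ⟨I, hI, X, lR X, hlR X, rfl⟩)
  · -- D4
    obtain ⟨X, hX, heq⟩ := List.mem_filterMap.1 h
    split at heq
    next x' h' =>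
      obtain rfl := Option.some.inj heq
      exact Provable.ax (mem_AXbasic_d4 ⟨I, hI, X, x', S.Int_ok I hI X x' h', h', rfl⟩)
    next h' => exact absurd heq (by simp)

/-- A Boolean valuation satisfying all base facts determines an effective
assignment on which it agrees with satisfaction. -/
lemma exists_assignment (hlV : ∀ X, X ∈ lV)
    (hlR : ∀ X (x : {x : S.Val // x ∈ S.RV X}), x ∈ lR X)
    {I : S.V → Option S.Val} (hI : I ∈ S.Int) (val : S.V → S.Val → Bool)
    (hbase : ∀ a ∈ baseList lV lR I hI, Event.evalB val a = true) :
    ∃ v : Assignment S, (∀ X x, I X = some x → v.1 X = x) ∧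
      (∀ e : Event S, Event.evalB val e = true ↔ e.sat v) := by
  have hch : ∀ X : S.V, ∃ x : {x : S.Val // x ∈ S.RV X}, val X x.1 = true := by
    intro X
    have h2 := hbase (Event.disjEq X (lR X))
      (by
        rw [baseList]
        exact List.mem_append.2 (Or.inl (List.mem_append.2 (Or.inr
          (List.mem_map.2 ⟨X, hlV X, rfl⟩)))))
    rw [show Event.disjEq X (lR X)
        = Event.bigOr ((lR X).map fun x => Event.prim X x.1 x.2) from rfl,
      Event.evalB_bigOr] at h2
    obtain ⟨a, ha, hval⟩ := h2
    obtain ⟨x, hx, rfl⟩ := List.mem_map.1 ha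
    exact ⟨x, hval⟩
  choose f hf using hch
  refine ⟨⟨fun X => (f X).1, fun X => (f X).2⟩, ?_, ?_⟩
  case refine_2 =>
    refine evalB_eq_sat val _ hf ?_
    intro X x hx hne
    have h1 := hbase _ (by
      rw [baseList]
      exact List.mem_append.2 (Or.inl (List.mem_append.2 (Or.inl
        (mem_d1List lV lR hlV hlR (f X).2 hx (fun h => hne h.symm))))))
    simp only [Event.imp, Event.evalB, Bool.or_eq_true, Bool.not_eq_true'] at h1
    rcases h1 with h1 | h1
    · rw [hf X] at h1; exact absurd h1 (by simp)
    · exact h1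
  case refine_1 =>
    intro X x hIX
    have h4 := hbase _ (by
      rw [baseList]
      exact List.mem_append.2 (Or.inr (mem_d4List lV hlV hI hIX)))
    rw [show Event.evalB val (Event.prim X x (S.Int_ok I hI X x hIX)) = val X x
      from rfl] at h4
    by_contra hne
    have h1 := hbase _ (by
      rw [baseList]
      exact List.mem_append.2 (Or.inl (List.mem_append.2 (Or.inl
        (mem_d1List lV lR hlV hlR (f X).2 (S.Int_ok I hI X x hIX)
          (fun h => hne h))))))
    simp only [Event.imp, Event.evalB, Bool.or_eq_true, Bool.not_eq_true'] at h1
    rcases h1 with h1 | h1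
    · rw [hf X] at h1; exact absurd h1 (by simp)
    · rw [h4] at h1; exact absurd h1 (by simp)

/-- Any event holding in every effective assignment follows tautologically
from the base facts. -/
lemma taut_base_imp (hlV : ∀ X, X ∈ lV)
    (hlR : ∀ X (x : {x : S.Val // x ∈ S.RV X}), x ∈ lR X)
    {I : S.V → Option S.Val} (hI : I ∈ S.Int) (b : Event S)
    (hb : ∀ v : Assignment S, (∀ X x, I X = some x → v.1 X = x) → b.sat v) :
    (Event.imp (Event.bigAnd (baseList lV lR I hI)) b).Taut := by
  intro val
  simp only [Event.imp, Event.evalB, Bool.or_eq_true, Bool.not_eq_true']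
  by_cases h : Event.evalB val (Event.bigAnd (baseList lV lR I hI)) = true
  · right
    obtain ⟨v, heff, hiff⟩ := exists_assignment lV lR hlV hlR hI val
      ((Event.evalB_bigAnd _ _).1 h)
    exact (hiff b).2 (hb v heff)
  · left; exact Bool.eq_false_iff.2 h

open Classical in
/-- The list of effective assignments falsifying `e`. -/
noncomputable def badList (lA : List (Assignment S)) (I : S.V → Option S.Val)
    (e : Event S) : List (Assignment S) :=
  lA.filter fun v => decide ((∀ X x, I X = some x → v.1 X = x) ∧ ¬ e.sat v)

lemma mem_badList {lA : List (Assignment S)} (hlA : ∀ v, v ∈ lA)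
    {I : S.V → Option S.Val} {e : Event S} (v : Assignment S) :
    v ∈ badList lA I e ↔ (∀ X x, I X = some x → v.1 X = x) ∧ ¬ e.sat v := by
  simp [badList, List.mem_filter, hlA v]

/-- The provable equivalence reducing a box atom to basis atoms. -/
noncomputable def eqv (lA : List (Assignment S)) (I : S.V → Option S.Val)
    (hI : I ∈ S.Int) (e : Event S) : CForm S :=
  CForm.and
    (CForm.imp (CForm.box I hI e)
      (CForm.bigAnd (((badList lA I e).map fun v => Event.not (delta lV v)).map
        (CForm.box I hI))))
    (CForm.imp
      (CForm.bigAnd (((badList lA I e).map fun v => Event.not (delta lV v)).map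
        (CForm.box I hI)))
      (CForm.box I hI e))

lemma eqv_provable (lA : List (Assignment S)) (hlV : ∀ X, X ∈ lV)
    (hlR : ∀ X (x : {x : S.Val // x ∈ S.RV X}), x ∈ lR X)
    (hlA : ∀ v, v ∈ lA) (I : S.V → Option S.Val) (hI : I ∈ S.Int) (e : Event S) :
    Provable (AXbasic S) (eqv lV lA I hI e) := by
  set bs : List (Event S) := (badList lA I e).map fun v => Event.not (delta lV v)
    with hbs
  have hboxbase : Provable (AXbasic S) (CForm.box I hI
      (Event.bigAnd (baseList lV lR I hI))) :=
    box_bigAnd (boxed_base lV lR hlR hI)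
  -- Direction A
  have dirA : Provable (AXbasic S) (CForm.imp (CForm.box I hI e)
      (CForm.bigAnd (bs.map (CForm.box I hI)))) := by
    apply imp_bigAnd
    intro ψ hψ
    obtain ⟨a, ha, rfl⟩ := List.mem_map.1 hψ
    obtain ⟨v, hv, rfl⟩ := List.mem_map.1 ha
    obtain ⟨heffv, hnsat⟩ := (mem_badList hlA v).1 hv
    have hbox : Provable (AXbasic S)
        (CForm.box I hI (Event.imp e (Event.not (delta lV v)))) := by
      refine box_mono hboxbase (taut_base_imp lV lR hlV hlR hI _ ?_)
      intro v₀ _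
      simp only [Event.imp, Event.sat]
      by_cases hd : (delta lV v).sat v₀
      · left; intro he
        rw [(sat_delta lV hlV v v₀).1 hd] at he
        exact hnsat he
      · right; exact hd
    refine provable_of_tc
      [CForm.box I hI (Event.imp e (Event.not (delta lV v))),
       CForm.imp (CForm.and (CForm.box I hI e)
          (CForm.box I hI (Event.imp e (Event.not (delta lV v)))))
         (CForm.box I hI (Event.not (delta lV v)))] _ ?_ ?_
    · intro χ hχ
      rcases List.mem_cons.1 hχ with h | hχ; · exact h ▸ hbox
      rcases List.mem_cons.1 hχ with h | hχ; · exact h ▸ provable_d7 _ _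
      simp at hχ
    · intro val hv'
      simp only [List.forall_mem_cons] at hv'
      obtain ⟨h1, h2, -⟩ := hv'
      simp only [CForm.imp, CForm.evalB, Bool.or_eq_true, Bool.not_eq_true',
        Bool.and_eq_false_iff, Bool.eq_false_iff, ne_eq, Bool.and_eq_true] at h1 h2 ⊢
      tauto
  -- Direction B
  have f3 : Provable (AXbasic S)
      (CForm.box I hI (Event.imp (Event.bigAnd bs) e)) := by
    refine box_mono hboxbase (taut_base_imp lV lR hlV hlR hI _ ?_)
    intro v₀ heff₀
    simp only [Event.imp, Event.sat]
    by_cases he : e.sat v₀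
    · right; exact he
    · left
      intro hsatbs
      have hvbad : v₀ ∈ badList lA I e := (mem_badList hlA v₀).2 ⟨heff₀, he⟩
      have := (Event.sat_bigAnd v₀ bs).1 hsatbs _
        (List.mem_map.2 ⟨v₀, hvbad, rfl⟩)
      simp only [Event.sat] at this
      exact this ((sat_delta lV hlV v₀ v₀).2 rfl)
  have f2 : Provable (AXbasic S)
      (CForm.imp (CForm.bigAnd (bs.map (CForm.box I hI)))
        (CForm.box I hI (Event.bigAnd bs))) := imp_box_bigAnd bs
  have dirB : Provable (AXbasic S)
      (CForm.imp (CForm.bigAnd (bs.map (CForm.box I hI))) (CForm.box I hI e)) := by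
    refine provable_of_tc
      [CForm.imp (CForm.bigAnd (bs.map (CForm.box I hI)))
          (CForm.box I hI (Event.bigAnd bs)),
       CForm.box I hI (Event.imp (Event.bigAnd bs) e),
       CForm.imp (CForm.and (CForm.box I hI (Event.bigAnd bs))
          (CForm.box I hI (Event.imp (Event.bigAnd bs) e)))
         (CForm.box I hI e)] _ ?_ ?_
    · intro χ hχ
      rcases List.mem_cons.1 hχ with h | hχ; · exact h ▸ f2
      rcases List.mem_cons.1 hχ with h | hχ; · exact h ▸ f3
      rcases List.mem_cons.1 hχ with h | hχ; · exact h ▸ provable_d7 _ _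
      simp at hχ
    · intro val hv'
      simp only [List.forall_mem_cons] at hv'
      obtain ⟨h1, h2, h3, -⟩ := hv'
      simp only [CForm.imp, CForm.evalB, Bool.or_eq_true, Bool.not_eq_true',
        Bool.and_eq_false_iff, Bool.eq_false_iff, ne_eq, Bool.and_eq_true] at h1 h2 h3 ⊢
      tauto
  -- combine
  refine provable_of_tc
    [CForm.imp (CForm.box I hI e) (CForm.bigAnd (bs.map (CForm.box I hI))),
     CForm.imp (CForm.bigAnd (bs.map (CForm.box I hI))) (CForm.box I hI e)] _ ?_ ?_
  · intro χ hχ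
    rcases List.mem_cons.1 hχ with h | hχ; · exact h ▸ dirA
    rcases List.mem_cons.1 hχ with h | hχ; · exact h ▸ dirB
    simp at hχ
  · intro val hv'
    simp only [List.forall_mem_cons] at hv'
    obtain ⟨h1, h2, -⟩ := hv'
    simp only [eqv, CForm.imp, CForm.evalB, Bool.or_eq_true, Bool.not_eq_true',
      Bool.and_eq_true, ← hbs] at h1 h2 ⊢
    tauto

end Complete

/-! ### Box atoms of a causal formula -/

def boxesL : CForm S → List ({I : S.V → Option S.Val // I ∈ S.Int} × Event S)
  | .tru => []
  | .box I hI e => [(⟨I, hI⟩, e)]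
  | .not ψ => boxesL ψ
  | .and a b => boxesL a ++ boxesL b
  | .or a b => boxesL a ++ boxesL b

lemma evalB_congr {val val' : (S.V → Option S.Val) → Event S → Bool} :
    ∀ ψ : CForm S, (∀ p ∈ boxesL ψ, val p.1.1 p.2 = val' p.1.1 p.2) →
      CForm.evalB val ψ = CForm.evalB val' ψ := by
  intro ψ h
  induction ψ with
  | tru => rfl
  | box I hI e => exact h (⟨I, hI⟩, e) (by simp [boxesL])
  | not ψ ih => simp only [CForm.evalB]; rw [ih h]
  | and a b iha ihb =>
      simp only [CForm.evalB]
      rw [iha (fun p hp => h p (List.mem_append.2 (Or.inl hp))),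
        ihb (fun p hp => h p (List.mem_append.2 (Or.inr hp)))]
  | or a b iha ihb =>
      simp only [CForm.evalB]
      rw [iha (fun p hp => h p (List.mem_append.2 (Or.inl hp))),
        ihb (fun p hp => h p (List.mem_append.2 (Or.inr hp)))]

/-- If `S` is a finite signature, then `AX⁺_basic(S)` is
sound and complete for `L(S)` with respect to the class of all GSEMs with
signature `S`: a causal formula is provable in `AX⁺_basic(S)` iff it is valid
in every GSEM with signature `S`. -/
theorem axbasic_sound_complete_GSEM (S : Signature) (hfin : S.IsFinite)
    (φ : CForm S) :
    Provable (AXbasic S) φ ↔ ∀ M : GSEM S, M.Valid φ := by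
  constructor
  · intro h M; exact sound h M
  · intro hvalid
    classical
    obtain ⟨hU, hV, hRU, hRV⟩ := hfin
    haveI : Finite S.V := hV
    haveI : Fintype S.V := Fintype.ofFinite S.V
    haveI instR : ∀ X : S.V, Fintype {x : S.Val // x ∈ S.RV X} :=
      fun X => (hRV X).fintype
    haveI : ∀ X : S.V, Finite {x : S.Val // x ∈ S.RV X} :=
      fun X => Finite.of_fintype _
    haveI : Finite (Assignment S) := by
      have hinj : Function.Injective
          (fun (v : Assignment S) (X : S.V) =>
            (⟨v.1 X, v.2 X⟩ : {x : S.Val // x ∈ S.RV X})) := by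
        intro v w h
        exact Subtype.ext (funext fun X => congrArg Subtype.val (congrFun h X))
      exact Finite.of_injective _ hinj
    haveI : Fintype (Assignment S) := Fintype.ofFinite _
    set lV : List S.V := (Finset.univ : Finset S.V).toList with hlVdef
    have hlV : ∀ X, X ∈ lV := fun X => by simp [hlVdef]
    set lR : ∀ X : S.V, List {x : S.Val // x ∈ S.RV X} :=
      fun X => (Finset.univ : Finset {x : S.Val // x ∈ S.RV X}).toList with hlRdef
    have hlR : ∀ X (x : {x : S.Val // x ∈ S.RV X}), x ∈ lR X :=
      fun X x => by simp [hlRdef]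
    set lA : List (Assignment S) := (Finset.univ : Finset (Assignment S)).toList
      with hlAdef
    have hlA : ∀ v, v ∈ lA := fun v => by simp [hlAdef]
    refine provable_of_tc ((boxesL φ).map fun p => eqv lV lA p.1.1 p.1.2 p.2) φ ?_ ?_
    · intro ψ hψ
      obtain ⟨p, hp, rfl⟩ := List.mem_map.1 hψ
      exact eqv_provable lV lR lA hlV hlR hlA p.1.1 p.1.2 p.2
    · intro val hfacts
      -- the GSEM realizing the valuation `val`
      set T : (S.V → Option S.Val) → Set (Assignment S) := fun I =>
        {v | (∀ X x, I X = some x → v.1 X = x)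
          ∧ val I (Event.not (delta lV v)) = false} with hT
      set M : GSEM S :=
        ⟨fun I _ _ => T I, fun I hI u v hv X x h => hv.1 X x h⟩ with hM
      have u0 : Context S :=
        ⟨fun Y => (S.RU_nonempty Y).some, fun Y => (S.RU_nonempty Y).some_mem⟩
      have hsat : CForm.sat M.F u0 φ := hvalid M u0
      have heval : CForm.evalB (valOf M.F u0) φ = true :=
        (CForm.sat_iff_evalB M.F u0 φ).1 hsat
      rw [← heval]
      apply evalB_congr
      rintro ⟨⟨I, hI⟩, e⟩ hp
      have hfact := hfacts _ (List.mem_map.2 ⟨(⟨I, hI⟩, e), hp, rfl⟩)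
      -- unpack the equivalence fact
      simp only [eqv, CForm.imp, CForm.evalB, Bool.and_eq_true, Bool.or_eq_true,
        Bool.not_eq_true'] at hfact
      obtain ⟨hAB, hBA⟩ := hfact
      have hbigand : ∀ val' : (S.V → Option S.Val) → Event S → Bool,
          CForm.evalB val' (CForm.bigAnd
            (((badList lA I e).map fun v => Event.not (delta lV v)).map
              (CForm.box I hI))) = true
          ↔ ∀ v ∈ badList lA I e, val' I (Event.not (delta lV v)) = true := by
        intro val'
        rw [CForm.evalB_bigAnd]
        constructor
        · intro h v hv
          exact h _ (List.mem_map.2 ⟨_, List.mem_map.2 ⟨v, hv, rfl⟩, rfl⟩)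
        · intro h a ha
          obtain ⟨b, hb, rfl⟩ := List.mem_map.1 ha
          obtain ⟨v, hv, rfl⟩ := List.mem_map.1 hb
          exact h v hv
      have key : val I e = true ↔ ∀ v ∈ T I, e.sat v := by
        constructor
        · intro hval v hvT
          by_contra hns
          have hbad : v ∈ badList lA I e := (mem_badList hlA v).2 ⟨hvT.1, hns⟩
          rcases hAB with h | h
          · rw [hval] at h; exact absurd h (by simp)
          · have := (hbigand val).1 h v hbad
            rw [hvT.2] at this; exact absurd this (by simp)
        · intro hall
          rcases hBA with h | h
          · exfalso
            rw [Bool.eq_false_iff] at h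
            apply h
            refine (hbigand val).2 ?_
            intro v hv
            obtain ⟨heffv, hnsat⟩ := (mem_badList hlA v).1 hv
            by_contra hne
            have hfalse : val I (Event.not (delta lV v)) = false := by
              revert hne; cases val I (Event.not (delta lV v)) <;> simp
            exact hnsat (hall v ⟨heffv, hfalse⟩)
          · exact h
      show val I e = valOf M.F u0 I e
      have hspec : valOf M.F u0 I e = true ↔ ∀ v ∈ T I, e.sat v :=
        valOf_spec M.F u0 hI e
      cases hval : val I e
      · symm
        rw [Bool.eq_false_iff]
        intro hp'
        have := key.2 (hspec.1 hp')
        rw [hval] at this; exact absurd this (by simp)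
      · symm
        exact hspec.2 (key.1 hval)

end Causal
end

section
/- Let AX*_basic be the result of replacing axiom schema D2 with the inference rule D2+ in AX+_basic. Then for every endogenous variable X with finite range R(X) and every allowed intervention Y ← y, the D2 instance [Y ← y](⋁_{x ∈ R(X)} X = x) is derivable in AX*_basic. -/
namespace Causal

/-- The axioms of `AX*_basic`: the result of removing D2 from `AX⁺_basic`
(D2 is replaced by the inference rule D2⁺, which is built into `ProvableStar`). -/
def AXstarBase (S : Signature) : Set (CForm S) :=
  AxD0 S ∪ AxD1 S ∪ AxD4 S ∪ AxD7 S ∪ AxD8 S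

/-! Apply D2⁺ with antecedent `true`, `ψ = ¬ ⋁_{x ∈ R(X)} X = x` and value set `R(X)`, which
is admissible because a finite range consists of named values. Each premise
`[Y ← y](ψ ⇒ X ≠ x)` is an instance of D8, and the conclusion `[Y ← y]¬¬⋁_x X = x` gives
`[Y ← y]⋁_x X = x` by D7 and D8. -/

variable {S : Signature}

theorem Event.evalB_disjEq_of_mem {X : S.V} {l : List {x : S.Val // x ∈ S.RV X}}
    {x : {x : S.Val // x ∈ S.RV X}} (hx : x ∈ l) (val : S.V → S.Val → Bool)
    (hv : val X x.1 = true) : (Event.disjEq X l).evalB val = true := by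
  induction l with
  | nil => cases hx
  | cons a t ih =>
    simp only [Event.disjEq, Event.bigOr, List.map_cons, List.foldr_cons,
      Event.evalB] at ih ⊢
    rcases List.mem_cons.mp hx with rfl | hxt
    · simp [hv]
    · simp [ih hxt]

theorem Event.taut_not_disjEq_imp_ne {X : S.V} {l : List {x : S.Val // x ∈ S.RV X}}
    {x : {x : S.Val // x ∈ S.RV X}} (hx : x ∈ l) :
    (Event.imp (Event.not (Event.disjEq X l)) (Event.not (Event.prim X x.1 x.2))).Taut := by
  intro val
  by_cases hv : val X x.1 = true
  · simp [Event.imp, Event.evalB, Event.evalB_disjEq_of_mem hx val hv]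
  · simp [Event.imp, Event.evalB, hv]

theorem Event.taut_not_not_imp (e : Event S) : (Event.imp (Event.not (Event.not e)) e).Taut := by
  intro val
  simp only [Event.imp, Event.evalB]
  cases e.evalB val <;> rfl

namespace ProvableStar

variable {Ax : Set (CForm S)} {W : Set S.V} {R' : S.V → Set S.Val} {L : Set (CForm S)}

theorem of_taut (h0 : AxD0 S ⊆ Ax) {φ : CForm S} (hφ : φ.Taut) :
    ProvableStar Ax W R' L φ :=
  ax (h0 hφ)

theorem and_intro (h0 : AxD0 S ⊆ Ax) {a b : CForm S}
    (ha : ProvableStar Ax W R' L a) (hb : ProvableStar Ax W R' L b) :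
    ProvableStar Ax W R' L (CForm.and a b) := by
  have hintro : (CForm.imp a (CForm.imp b (CForm.and a b))).Taut := by
    intro val
    simp only [CForm.imp, CForm.evalB]
    cases a.evalB val <;> cases b.evalB val <;> rfl
  exact mp (mp (of_taut h0 hintro) ha) hb

theorem imp_of (h0 : AxD0 S ⊆ Ax) {a : CForm S} (b : CForm S)
    (ha : ProvableStar Ax W R' L a) : ProvableStar Ax W R' L (CForm.imp b a) := by
  have hweaken : (CForm.imp a (CForm.imp b a)).Taut := by
    intro val
    simp only [CForm.imp, CForm.evalB]
    cases a.evalB val <;> cases b.evalB val <;> rfl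
  exact mp (of_taut h0 hweaken) ha

theorem bigAnd (h0 : AxD0 S ⊆ Ax) {φs : List (CForm S)}
    (h : ∀ φ ∈ φs, ProvableStar Ax W R' L φ) :
    ProvableStar Ax W R' L (CForm.bigAnd φs) := by
  induction φs with
  | nil => exact of_taut h0 fun _ => rfl
  | cons φ φs ih =>
    exact and_intro h0 (h φ List.mem_cons_self) (ih fun ψ hψ => h ψ (List.mem_cons_of_mem φ hψ))

theorem box_not_of_forall_box_imp_ne (h0 : AxD0 S ⊆ Ax) {I : S.V → Option S.Val}
    {hI : I ∈ S.Int} {ψ : Event S} {X : S.V} (hXW : X ∈ W) (hR' : R' X = S.RV X)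
    {l : List {x : S.Val // x ∈ S.RV X}} (hl : ∀ x, x ∈ l)
    (hL : CForm.imp CForm.tru (CForm.box I hI (Event.not ψ)) ∈ L)
    (h : ∀ x ∈ l, ProvableStar Ax W R' L
      (CForm.box I hI (Event.imp ψ (Event.not (Event.prim X x.1 x.2))))) :
    ProvableStar Ax W R' L (CForm.box I hI (Event.not ψ)) := by
  have hpremise : ProvableStar Ax W R' L (CForm.imp CForm.tru (CForm.bigAnd (l.map fun x =>
      CForm.box I hI (Event.imp ψ (Event.not (Event.prim X x.1 x.2)))))) :=
    imp_of h0 _ (bigAnd h0 (List.forall_mem_map.mpr h))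
  have hnamed : ∀ x ∈ l, x.1 ∈ R' X := fun x _ => hR'.symm ▸ x.2
  have hrule := d2plus hXW l hnamed (fun x hx _ => hl ⟨x, hx⟩)
    (fun ⟨x, hxR', hx⟩ => ⟨⟨x, by rwa [← hR']⟩, hl _, hx⟩) hL hpremise
  exact mp hrule (of_taut h0 fun _ => rfl)

theorem box_of_box_not_not (h0 : AxD0 S ⊆ Ax) (h7 : AxD7 S ⊆ Ax) (h8 : AxD8 S ⊆ Ax)
    {I : S.V → Option S.Val} {hI : I ∈ S.Int} {e : Event S}
    (h : ProvableStar Ax W R' L (CForm.box I hI (Event.not (Event.not e)))) :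
    ProvableStar Ax W R' L (CForm.box I hI e) :=
  mp (ax (h7 ⟨I, hI, _, e, rfl⟩))
    (and_intro h0 h (ax (h8 ⟨I, hI, _, Event.taut_not_not_imp e, rfl⟩)))

end ProvableStar

theorem d2_derivable_in_axstar_general (S : Signature) (R' : S.V → Set S.Val)
    (hR'fin : ∀ X, (S.RV X).Finite → R' X = S.RV X)
    (X : S.V) (hXfin : (S.RV X).Finite)
    (I : S.V → Option S.Val) (hI : I ∈ S.Int)
    (l : List {x : S.Val // x ∈ S.RV X})
    (hl : ∀ x : {x : S.Val // x ∈ S.RV X}, x ∈ l) :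
    ProvableStar (AXstarBase S) Set.univ R' Set.univ
      (CForm.box I hI (Event.disjEq X l)) := by
  have h0 : AxD0 S ⊆ AXstarBase S := fun _ h => Or.inl (Or.inl (Or.inl (Or.inl h)))
  have h7 : AxD7 S ⊆ AXstarBase S := fun _ h => Or.inl (Or.inr h)
  have h8 : AxD8 S ⊆ AXstarBase S := fun _ h => Or.inr h
  refine ProvableStar.box_of_box_not_not h0 h7 h8 ?_
  refine ProvableStar.box_not_of_forall_box_imp_ne h0 (Set.mem_univ X) (hR'fin X hXfin) hl
    (Set.mem_univ _) fun x hx => ?_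
  exact ProvableStar.ax (h8 ⟨I, hI, _, Event.taut_not_disjEq_imp_ne hx, rfl⟩)

/-- Let `AX*_basic` be the result of replacing the axiom
schema D2 by the inference rule D2⁺ in `AX⁺_basic`. Then for every endogenous
variable `X` with finite range `R(X)` and every allowed intervention `Y ← y`,
the D2 instance `[Y ← y](⋁_{x ∈ R(X)} X = x)` is derivable in `AX*_basic`. -/
theorem d2_derivable_in_axstar (S : Signature) (R' : S.V → Set S.Val)
    (hR'sub : ∀ X, R' X ⊆ S.RV X)
    (hR'fin : ∀ X, (S.RV X).Finite → R' X = S.RV X)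
    (hR'inf : ∀ X, ¬ (S.RV X).Finite → ¬ (R' X).Finite)
    (X : S.V) (hXfin : (S.RV X).Finite)
    (I : S.V → Option S.Val) (hI : I ∈ S.Int)
    (l : List {x : S.Val // x ∈ S.RV X})
    (hl : ∀ x : {x : S.Val // x ∈ S.RV X}, x ∈ l) :
    ProvableStar (AXstarBase S) Set.univ R' Set.univ
      (CForm.box I hI (Event.disjEq X l)) :=
  d2_derivable_in_axstar_general S R' hR'fin X hXfin I hI l hl

end Causal
end
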